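/- For a 2×2 complex matrix P and k ∈ {1,2,3,4}, let P^{(k)} denote the 16×16 matrix obtained from the fourfold Kronecker product that has P in the k-th factor and I₂ in the other three factors. Let α, β, γ ∈ ℝ and define the 16×16 complex matrix B = α(X^{(1)} − X^{(4)})(X^{(2)} − X^{(3)}) + β(Y^{(1)} − Y^{(4)})(Y^{(2)} − Y^{(3)}) + γ(Z^{(1)} − Z^{(4)})(Z^{(2)} − Z^{(3)}). Then: (i) for all r¹, r², r³, r⁴ ∈ ℝ³, the trace of B·(ρ(r¹) ⊗ ρ(r²) ⊗ ρ(r³) ⊗ ρ(r⁴)) equals (r² − r³)ᵀ diag(α,β,γ) (r¹ − r⁴); and (ii) for any fixed r¹, r⁴ ∈ ℝ³, the minimum of (r² − r³)ᵀ diag(α,β,γ) (r¹ − r⁴) over all unit vectors r², r³ ∈ ℝ³ equals −2·‖diag(α,β,γ)·(r¹ − r⁴)‖. -/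
import Mathlib


open Matrix
open scoped Kronecker

/-- The Pauli matrix X. -/
def pauliX : Matrix (Fin 2) (Fin 2) ℂ := !![0, 1; 1, 0]

/-- The Pauli matrix Y. -/
def pauliY : Matrix (Fin 2) (Fin 2) ℂ := !![0, -Complex.I; Complex.I, 0]

/-- The Pauli matrix Z. -/
def pauliZ : Matrix (Fin 2) (Fin 2) ℂ := !![1, 0; 0, -1]

/-- The index type of the fourfold Kronecker product of `2×2` matrices. -/
abbrev Q4 := ((Fin 2 × Fin 2) × Fin 2) × Fin 2

/-- `emb P k` is the fourfold Kronecker product with `P` in the `k`-th factor and the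
identity in the other three factors. -/
def emb (P : Matrix (Fin 2) (Fin 2) ℂ) : Fin 4 → Matrix Q4 Q4 ℂ :=
  ![((P ⊗ₖ (1 : Matrix (Fin 2) (Fin 2) ℂ)) ⊗ₖ (1 : Matrix (Fin 2) (Fin 2) ℂ)) ⊗ₖ
      (1 : Matrix (Fin 2) (Fin 2) ℂ),
    (((1 : Matrix (Fin 2) (Fin 2) ℂ) ⊗ₖ P) ⊗ₖ (1 : Matrix (Fin 2) (Fin 2) ℂ)) ⊗ₖ
      (1 : Matrix (Fin 2) (Fin 2) ℂ),
    (((1 : Matrix (Fin 2) (Fin 2) ℂ) ⊗ₖ (1 : Matrix (Fin 2) (Fin 2) ℂ)) ⊗ₖ P) ⊗ₖ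
      (1 : Matrix (Fin 2) (Fin 2) ℂ),
    (((1 : Matrix (Fin 2) (Fin 2) ℂ) ⊗ₖ (1 : Matrix (Fin 2) (Fin 2) ℂ)) ⊗ₖ
      (1 : Matrix (Fin 2) (Fin 2) ℂ)) ⊗ₖ P]

/-- The Bloch matrix `ρ(r) = (1/2)(I + r₁X + r₂Y + r₃Z)`. -/
noncomputable def bloch (r : Fin 3 → ℝ) : Matrix (Fin 2) (Fin 2) ℂ :=
  (1 / 2 : ℂ) • ((1 : Matrix (Fin 2) (Fin 2) ℂ) +
    (r 0 : ℂ) • pauliX + (r 1 : ℂ) • pauliY + (r 2 : ℂ) • pauliZ)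

/-- The Euclidean norm on `Fin 3 → ℝ`. -/
noncomputable def norm3 (v : Fin 3 → ℝ) : ℝ := Real.sqrt (∑ i, v i ^ 2)

lemma trace_bloch (r : Fin 3 → ℝ) : (bloch r).trace = 1 := by
  simp [bloch, pauliX, pauliY, pauliZ, Matrix.trace, Matrix.diag, Fin.sum_univ_succ]
  ring

lemma trX (r : Fin 3 → ℝ) : (pauliX * bloch r).trace = (r 0 : ℂ) := by
  simp [bloch, pauliX, pauliY, pauliZ, Matrix.trace, Matrix.diag, Matrix.mul_apply,
    Fin.sum_univ_succ]
  ring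

lemma trY (r : Fin 3 → ℝ) : (pauliY * bloch r).trace = (r 1 : ℂ) := by
  simp [bloch, pauliX, pauliY, pauliZ, Matrix.trace, Matrix.diag, Matrix.mul_apply,
    Fin.sum_univ_succ]
  ring_nf
  simp [Complex.I_sq]

lemma trZ (r : Fin 3 → ℝ) : (pauliZ * bloch r).trace = (r 2 : ℂ) := by
  simp [bloch, pauliX, pauliY, pauliZ, Matrix.trace, Matrix.diag, Matrix.mul_apply,
    Fin.sum_univ_succ]
  ring

lemma key (P ρ1 ρ2 ρ3 ρ4 : Matrix (Fin 2) (Fin 2) ℂ)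
    (h1 : ρ1.trace = 1) (h2 : ρ2.trace = 1) (h3 : ρ3.trace = 1) (h4 : ρ4.trace = 1) :
    (((emb P 0 - emb P 3) * (emb P 1 - emb P 2)) * (((ρ1 ⊗ₖ ρ2) ⊗ₖ ρ3) ⊗ₖ ρ4)).trace =
    ((P * ρ1).trace - (P * ρ4).trace) * ((P * ρ2).trace - (P * ρ3).trace) := by
  show ((((P ⊗ₖ 1) ⊗ₖ 1) ⊗ₖ 1 - ((1 ⊗ₖ 1) ⊗ₖ 1) ⊗ₖ P) *
      ((((1:Matrix (Fin 2) (Fin 2) ℂ) ⊗ₖ P) ⊗ₖ 1) ⊗ₖ 1 - ((1 ⊗ₖ 1) ⊗ₖ P) ⊗ₖ 1) *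
      (((ρ1 ⊗ₖ ρ2) ⊗ₖ ρ3) ⊗ₖ ρ4)).trace = _
  simp only [Matrix.sub_mul, Matrix.mul_sub, ← Matrix.mul_kronecker_mul, Matrix.one_mul,
    Matrix.mul_one, Matrix.trace_sub, Matrix.trace_kronecker, h1, h2, h3, h4, one_mul, mul_one]
  ring

lemma norm3_nonneg (v : Fin 3 → ℝ) : 0 ≤ norm3 v := Real.sqrt_nonneg _

lemma norm3_sq (v : Fin 3 → ℝ) : norm3 v ^ 2 = ∑ i, v i ^ 2 :=
  Real.sq_sqrt (Finset.sum_nonneg fun _ _ => sq_nonneg _)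

lemma norm3_smul (c : ℝ) (v : Fin 3 → ℝ) : norm3 (c • v) = |c| * norm3 v := by
  unfold norm3
  rw [← Real.sqrt_sq_eq_abs, ← Real.sqrt_mul (sq_nonneg c), Finset.mul_sum]
  refine congrArg Real.sqrt (Finset.sum_congr rfl fun i _ => ?_)
  simp [smul_eq_mul, mul_pow]

lemma norm3_neg (v : Fin 3 → ℝ) : norm3 (-v) = norm3 v := by
  have := norm3_smul (-1) v
  simpa using this

lemma cs_lower (v d : Fin 3 → ℝ) : -(norm3 v * norm3 d) ≤ ∑ i, v i * d i := by
  have h := Finset.sum_mul_sq_le_sq_mul_sq Finset.univ v d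
  have h2 : (∑ i, v i * d i) ^ 2 ≤ (norm3 v * norm3 d) ^ 2 := by
    rw [mul_pow, norm3_sq, norm3_sq]; exact h
  nlinarith [mul_nonneg (norm3_nonneg v) (norm3_nonneg d),
    sq_nonneg (∑ i, v i * d i + norm3 v * norm3 d)]

/-- The symmetric symmetrization gadget
`B = α(X⁽¹⁾-X⁽⁴⁾)(X⁽²⁾-X⁽³⁾) + β(Y⁽¹⁾-Y⁽⁴⁾)(Y⁽²⁾-Y⁽³⁾) + γ(Z⁽¹⁾-Z⁽⁴⁾)(Z⁽²⁾-Z⁽³⁾)`: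
(i) its expectation on a product of Bloch matrices is `(r²-r³)ᵀ diag(α,β,γ) (r¹-r⁴)`,
and (ii) for fixed `r¹, r⁴` the minimum of this quantity over unit vectors `r², r³` is
`-2‖diag(α,β,γ)(r¹-r⁴)‖`. -/
theorem stmt10 (α β γ : ℝ) (B : Matrix Q4 Q4 ℂ)
    (hB : B = (α : ℂ) • ((emb pauliX 0 - emb pauliX 3) * (emb pauliX 1 - emb pauliX 2)) +
        (β : ℂ) • ((emb pauliY 0 - emb pauliY 3) * (emb pauliY 1 - emb pauliY 2)) +
        (γ : ℂ) • ((emb pauliZ 0 - emb pauliZ 3) * (emb pauliZ 1 - emb pauliZ 2))) :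
    (∀ r1 r2 r3 r4 : Fin 3 → ℝ,
      Matrix.trace (B * (((bloch r1 ⊗ₖ bloch r2) ⊗ₖ bloch r3) ⊗ₖ bloch r4)) =
        (((r2 - r3) ⬝ᵥ (Matrix.diagonal ![α, β, γ]).mulVec (r1 - r4) : ℝ) : ℂ)) ∧
    (∀ r1 r4 : Fin 3 → ℝ,
      IsLeast
        {y : ℝ | ∃ r2 r3 : Fin 3 → ℝ, norm3 r2 = 1 ∧ norm3 r3 = 1 ∧
          y = (r2 - r3) ⬝ᵥ (Matrix.diagonal ![α, β, γ]).mulVec (r1 - r4)}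
        (-2 * norm3 ((Matrix.diagonal ![α, β, γ]).mulVec (r1 - r4)))) := by
  constructor
  · intro r1 r2 r3 r4
    rw [hB]
    simp only [Matrix.add_mul, smul_mul_assoc, Matrix.trace_add, Matrix.trace_smul,
      key pauliX _ _ _ _ (trace_bloch r1) (trace_bloch r2) (trace_bloch r3) (trace_bloch r4),
      key pauliY _ _ _ _ (trace_bloch r1) (trace_bloch r2) (trace_bloch r3) (trace_bloch r4),
      key pauliZ _ _ _ _ (trace_bloch r1) (trace_bloch r2) (trace_bloch r3) (trace_bloch r4),
      trX, trY, trZ]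
    simp only [dotProduct, Matrix.mulVec, Matrix.diagonal, Fin.sum_univ_succ,
      Matrix.of_apply, Pi.sub_apply, Fin.sum_univ_zero, smul_eq_mul]
    norm_num [Matrix.cons_val_zero, Matrix.cons_val_one, Matrix.head_cons]
    push_cast
    ring
  · intro r1 r4
    set d : Fin 3 → ℝ := (Matrix.diagonal ![α, β, γ]).mulVec (r1 - r4) with hd
    have hdot : ∀ v : Fin 3 → ℝ, v ⬝ᵥ d = ∑ i, v i * d i := fun v => rfl
    constructor
    · by_cases h0 : norm3 d = 0
      · refine ⟨![1,0,0], ![1,0,0], ?_, ?_, ?_⟩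
        · simp [norm3, Fin.sum_univ_succ]
        · simp [norm3, Fin.sum_univ_succ]
        · rw [h0, sub_self]
          simp [hdot]
      · have hM : 0 < norm3 d := lt_of_le_of_ne (norm3_nonneg d) (Ne.symm h0)
        refine ⟨(-(1:ℝ)/norm3 d) • d, ((1:ℝ)/norm3 d) • d, ?_, ?_, ?_⟩
        · rw [norm3_smul, abs_div, abs_neg, abs_one, abs_of_pos hM]
          field_simp
        · rw [norm3_smul, abs_div, abs_one, abs_of_pos hM]
          field_simp
        · rw [hdot]
          have : ∀ i : Fin 3, ((-(1:ℝ)/norm3 d) • d - ((1:ℝ)/norm3 d) • d) i * d i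
              = (-2/norm3 d) * (d i)^2 := by
            intro i; simp [Pi.sub_apply, smul_eq_mul]; ring
          rw [Finset.sum_congr rfl fun i _ => this i, ← Finset.mul_sum, ← norm3_sq]
          field_simp
    · rintro y ⟨r2, r3, h2, h3, rfl⟩
      rw [hdot]
      have e1 := cs_lower r2 d
      have e2 := cs_lower (-r3) d
      rw [norm3_neg, h3] at e2
      rw [h2] at e1
      have : ∑ i, (r2 - r3) i * d i = (∑ i, r2 i * d i) + ∑ i, (-r3) i * d i := by
        rw [← Finset.sum_add_distrib]
        exact Finset.sum_congr rfl fun i _ => by simp [Pi.sub_apply]; ring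
      rw [this]
      nlinarith [norm3_nonneg d]
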